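/- Let s > 0, let U be a random point distributed uniformly on the square S₀(s) = [−s/2, s/2] × [−s/2, s/2], and define the nearest grid distance R_g := inf_{k ∈ ℤ²} ‖s·k + U‖. Then the CDF of R_g is: P(R_g ≤ r) = 0 for r < 0; P(R_g ≤ r) = π r²/s² for 0 ≤ r ≤ s/2; P(R_g ≤ r) = (π r² − 4 r² arccos(s/(2r)) + s√(4r² − s²))/s² for s/2 ≤ r ≤ s/√2; and P(R_g ≤ r) = 1 for r ≥ s/√2. -/

import Mathlib

open MeasureTheory Real

namespace CdfGridAux

lemma hasDeriv_aux {r : ℝ} (hr : 0 < r) {x : ℝ} (hx : |x| < r) :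
    HasDerivAt (fun x : ℝ => x * Real.sqrt (r^2 - x^2) + r^2 * Real.arcsin (x/r))
      (2 * Real.sqrt (r^2 - x^2)) x := by
  have hpos : 0 < r^2 - x^2 := by
    have : x^2 < r^2 := sq_lt_sq' (abs_lt.mp hx).1 (abs_lt.mp hx).2
    linarith
  have hs : Real.sqrt (r^2 - x^2) ≠ 0 := ne_of_gt (Real.sqrt_pos.mpr hpos)
  have h1 : HasDerivAt (fun x : ℝ => r^2 - x^2) (-(2*x)) x := by
    simpa using ((hasDerivAt_pow 2 x).const_sub (r^2))
  have h2 : HasDerivAt (fun x : ℝ => Real.sqrt (r^2 - x^2))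
      (1 / (2 * Real.sqrt (r^2 - x^2)) * (-(2*x))) x :=
    (Real.hasDerivAt_sqrt (ne_of_gt hpos)).comp x h1
  have h3 : HasDerivAt (fun x : ℝ => x * Real.sqrt (r^2 - x^2))
      (1 * Real.sqrt (r^2 - x^2) + x * (1 / (2 * Real.sqrt (r^2 - x^2)) * (-(2*x)))) x :=
    (hasDerivAt_id x).mul h2
  have hxr : |x / r| < 1 := by
    rw [abs_div, abs_of_pos hr, div_lt_one hr]; exact hx
  have h4 : HasDerivAt (fun x : ℝ => Real.arcsin (x / r))
      (1 / Real.sqrt (1 - (x/r)^2) * (1/r)) x := by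
    exact (Real.hasDerivAt_arcsin (by nlinarith [abs_lt.mp hxr] : x/r ≠ -1)
      (by nlinarith [abs_lt.mp hxr] : x/r ≠ 1)).comp x ((hasDerivAt_id x).div_const r)
  have key : Real.sqrt (1 - (x/r)^2) = Real.sqrt (r^2 - x^2) / r := by
    have h5 : 1 - (x/r)^2 = (r^2 - x^2)/r^2 := by field_simp
    rw [h5, Real.sqrt_div hpos.le, Real.sqrt_sq hr.le]
  have := h3.add ((h4.const_mul (r^2)))
  convert this using 1
  · rfl
  · rfl
  · rfl
  rw [key]
  have hsq : Real.sqrt (r^2 - x^2) ^ 2 = r^2 - x^2 := Real.sq_sqrt hpos.le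
  field_simp
  linear_combination hsq

lemma arcsin_comp {t : ℝ} (ht0 : 0 ≤ t) (ht1 : t ≤ 1) :
    Real.arcsin (Real.sqrt (1 - t^2)) = Real.arccos t := by
  rw [← Real.sin_arccos, Real.arcsin_sin]
  · linarith [Real.arccos_nonneg t, Real.pi_div_two_pos]
  · exact Real.arccos_le_pi_div_two.mpr ht0

set_option maxHeartbeats 1000000 in
lemma area_integral {s r : ℝ} (hs : 0 < s) (h1 : s/2 < r) (h2 : r ≤ s / Real.sqrt 2) :
    ∫ x in (-(s/2))..(s/2), 2 * min (Real.sqrt (r^2 - x^2)) (s/2)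
      = π * r ^ 2 - 4 * r ^ 2 * Real.arccos (s / (2 * r)) + s * Real.sqrt (4 * r ^ 2 - s ^ 2) := by
  have hr : 0 < r := lt_trans (by positivity) h1
  have hr2 : r ^ 2 ≤ s ^ 2 / 2 := by
    have h2' : r * Real.sqrt 2 ≤ s := by
      rw [← le_div_iff₀ (by positivity)]; exact h2
    calc r ^ 2 = (r * Real.sqrt 2)^2 / 2 := by
          rw [mul_pow, Real.sq_sqrt (by norm_num : (2:ℝ) ≥ 0)]; ring
      _ ≤ s ^ 2 / 2 := by
          have := mul_le_mul h2' h2' (by positivity) hs.le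
          nlinarith
  set c := Real.sqrt (r^2 - (s/2)^2) with hc_def
  have hc0 : 0 ≤ c := Real.sqrt_nonneg _
  have hc2 : c ^ 2 = r^2 - (s/2)^2 := Real.sq_sqrt (by nlinarith)
  have hcs : c ≤ s / 2 := by
    rw [hc_def, show (s/2) = Real.sqrt ((s/2)^2) from (Real.sqrt_sq (by positivity)).symm]
    apply Real.sqrt_le_sqrt
    nlinarith [Real.sq_sqrt (by positivity : (0:ℝ) ≤ (s/2)^2)]
  have hcr : c < r := by nlinarith
  set f : ℝ → ℝ := fun x => 2 * min (Real.sqrt (r^2 - x^2)) (s/2) with hf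
  have hfc : Continuous f := by
    apply continuous_const.mul
    exact (Real.continuous_sqrt.comp (by continuity)).min continuous_const
  have hInt : ∀ a b : ℝ, IntervalIntegrable f volume a b := fun a b =>
    hfc.intervalIntegrable a b
  -- right piece
  set F : ℝ → ℝ := fun x => x * Real.sqrt (r^2 - x^2) + r^2 * Real.arcsin (x/r) with hF
  have hright : ∫ x in c..(s/2), f x = F (s/2) - F c := by
    have : ∫ x in c..(s/2), f x = ∫ x in c..(s/2), 2 * Real.sqrt (r^2 - x^2) := by
      apply intervalIntegral.integral_congr
      intro x hx
      rw [Set.uIcc_of_le hcs] at hx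
      have hx2 : c^2 ≤ x^2 := by
        nlinarith [hx.1, hx.2]
      simp only [hf]
      rw [min_eq_left]
      rw [Real.sqrt_le_iff]
      constructor
      · positivity
      · nlinarith
    rw [this]
    apply intervalIntegral.integral_eq_sub_of_hasDerivAt
    · intro x hx
      rw [Set.uIcc_of_le hcs] at hx
      exact hasDeriv_aux hr (by rw [abs_lt]; constructor <;> nlinarith [hx.1, hx.2])
    · exact ((continuous_const.mul (Real.continuous_sqrt.comp (by continuity))).intervalIntegrable _ _)
  -- middle piece
  have hmid : ∫ x in (-c)..c, f x = 2 * c * s := by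
    have : ∫ x in (-c)..c, f x = ∫ x in (-c)..c, s := by
      apply intervalIntegral.integral_congr
      intro x hx
      rw [Set.uIcc_of_le (by linarith)] at hx
      have hx2 : x^2 ≤ c^2 := by nlinarith [hx.1, hx.2]
      simp only [hf]
      rw [min_eq_right]
      · ring
      · rw [show (s/2) = Real.sqrt ((s/2)^2) from (Real.sqrt_sq (by positivity)).symm]
        apply Real.sqrt_le_sqrt; nlinarith
    rw [this, intervalIntegral.integral_const, smul_eq_mul]
    ring
  -- left piece
  have hleft : ∫ x in (-(s/2))..(-c), f x = F (s/2) - F c := by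
    rw [← hright]
    have := intervalIntegral.integral_comp_neg (a := c) (b := s/2) f
    rw [← this]
    apply intervalIntegral.integral_congr
    intro x _
    simp only [hf, neg_sq]
  have split1 : (∫ x in (-(s/2))..(-c), f x) + ∫ x in (-c)..c, f x
      = ∫ x in (-(s/2))..c, f x :=
    intervalIntegral.integral_add_adjacent_intervals (hInt _ _) (hInt _ _)
  have split2 : (∫ x in (-(s/2))..c, f x) + ∫ x in c..(s/2), f x
      = ∫ x in (-(s/2))..(s/2), f x :=
    intervalIntegral.integral_add_adjacent_intervals (hInt _ _) (hInt _ _)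
  have total : ∫ x in (-(s/2))..(s/2), f x = 2 * c * s + 2 * (F (s/2) - F c) := by
    rw [← split2, ← split1, hleft, hmid, hright]; ring
  -- now evaluate F
  have hsqc : Real.sqrt (r^2 - (s/2)^2) = c := rfl
  have hFs : F (s/2) = (s/2) * c + r^2 * (π/2 - Real.arccos (s/(2*r))) := by
    simp only [hF, hsqc]
    congr 1
    have : Real.arcsin (s/2/r) = π/2 - Real.arccos (s/(2*r)) := by
      rw [show s/2/r = s/(2*r) by ring, Real.arccos]; ring
    rw [this]
  have hFc : F c = c * (s/2) + r^2 * Real.arccos (s/(2*r)) := by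
    simp only [hF]
    congr 1
    · congr 1
      rw [show r^2 - c^2 = (s/2)^2 by rw [hc2]; ring, Real.sqrt_sq (by positivity)]
    · congr 1
      have ht0 : (0:ℝ) ≤ s/(2*r) := by positivity
      have ht1 : s/(2*r) ≤ 1 := by rw [div_le_one (by positivity)]; linarith
      have : c / r = Real.sqrt (1 - (s/(2*r))^2) := by
        rw [hc_def, show 1 - (s/(2*r))^2 = (r^2 - (s/2)^2)/r^2 by field_simp,
          Real.sqrt_div (by nlinarith), Real.sqrt_sq hr.le]
      rw [this, arcsin_comp ht0 ht1]
  have h4r : Real.sqrt (4 * r^2 - s^2) = 2 * c := by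
    rw [hc_def, show 4*r^2 - s^2 = 2^2 * (r^2 - (s/2)^2) by ring, Real.sqrt_mul (by norm_num),
      Real.sqrt_sq (by norm_num)]
  rw [total, hFs, hFc, h4r]
  ring

lemma volC {s r : ℝ} (hs : 0 < s) (hsr : s/2 ≤ r) :
    volume {p : ℝ × ℝ | p.1^2 + p.2^2 ≤ r^2 ∧ |p.1| ≤ s/2 ∧ |p.2| ≤ s/2}
      = ENNReal.ofReal (∫ x in (-(s/2))..(s/2), 2 * min (Real.sqrt (r^2 - x^2)) (s/2)) := by
  have hr : 0 < r := lt_of_lt_of_le (by positivity) hsr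
  set C : Set (ℝ × ℝ) := {p : ℝ × ℝ | p.1^2 + p.2^2 ≤ r^2 ∧ |p.1| ≤ s/2 ∧ |p.2| ≤ s/2} with hC_def
  have hC : MeasurableSet C := by
    apply MeasurableSet.inter
    · exact measurableSet_le ((measurable_fst.pow_const 2).add (measurable_snd.pow_const 2))
        measurable_const
    apply MeasurableSet.inter
    · exact measurableSet_le measurable_fst.abs measurable_const
    · exact measurableSet_le measurable_snd.abs measurable_const
  have hslice : ∀ x : ℝ, volume (Prod.mk x ⁻¹' C)
      = Set.indicator (Set.Icc (-(s/2)) (s/2))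
          (fun x => ENNReal.ofReal (2 * min (Real.sqrt (r^2 - x^2)) (s/2))) x := by
    intro x
    by_cases hx : x ∈ Set.Icc (-(s/2)) (s/2)
    · have hxs : |x| ≤ s/2 := abs_le.mpr ⟨hx.1, hx.2⟩
      have hnn : (0:ℝ) ≤ r^2 - x^2 := by nlinarith [sq_abs x, abs_nonneg x]
      set m := min (Real.sqrt (r^2 - x^2)) (s/2) with hm_def
      have hm0 : 0 ≤ m := le_min (Real.sqrt_nonneg _) (by positivity)
      have habs : ∀ y : ℝ, (|y| ≤ Real.sqrt (r^2 - x^2) ↔ x^2 + y^2 ≤ r^2) := fun y => by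
        rw [Real.le_sqrt (abs_nonneg y) hnn, sq_abs]
        constructor <;> intro h <;> linarith
      have : Prod.mk x ⁻¹' C = Set.Icc (-m) m := by
        ext y
        simp only [hC_def, Set.mem_preimage, Set.mem_setOf_eq]
        rw [Set.mem_Icc, ← abs_le, hm_def, le_min_iff]
        constructor
        · rintro ⟨h1, _, h3⟩
          exact ⟨(habs y).mpr h1, h3⟩
        · rintro ⟨h1, h2⟩
          exact ⟨(habs y).mp h1, hxs, h2⟩
      rw [this, Real.volume_Icc, Set.indicator_of_mem hx]
      congr 1; ring
    · have : Prod.mk x ⁻¹' C = ∅ := by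
        ext y
        simp only [hC_def, Set.mem_preimage, Set.mem_setOf_eq, Set.mem_empty_iff_false,
          iff_false, not_and]
        intro _ h
        exact absurd (abs_le.mp h) (fun ⟨a, b⟩ => hx ⟨a, b⟩)
      rw [this, measure_empty, Set.indicator_of_notMem hx]
  rw [Measure.volume_eq_prod, Measure.prod_apply hC]
  simp_rw [hslice]
  rw [lintegral_indicator measurableSet_Icc]
  have hf_cont : Continuous (fun x : ℝ => 2 * min (Real.sqrt (r^2 - x^2)) (s/2)) := by
    apply continuous_const.mul
    exact (Real.continuous_sqrt.comp (by continuity)).min continuous_const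
  rw [← MeasureTheory.ofReal_integral_eq_lintegral_ofReal
    (hf_cont.integrableOn_Icc) (ae_of_all _ (fun x => by
      have : (0:ℝ) ≤ min (Real.sqrt (r^2 - x^2)) (s/2) :=
        le_min (Real.sqrt_nonneg _) (by positivity)
      positivity))]
  rw [intervalIntegral.integral_of_le (by linarith), ← integral_Icc_eq_integral_Ioc]

lemma measure_preserving_coords :
    MeasurePreserving (fun x : EuclideanSpace ℝ (Fin 2) => ((x 0, x 1) : ℝ × ℝ))
      volume volume :=
  (volume_preserving_finTwoArrow ℝ).comp (EuclideanSpace.volume_preserving_symm_measurableEquiv_toLp (Fin 2))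

lemma norm_eq_sqrt (x : EuclideanSpace ℝ (Fin 2)) : ‖x‖ = Real.sqrt (x 0 ^ 2 + x 1 ^ 2) := by
  rw [EuclideanSpace.norm_eq]; simp [Fin.sum_univ_two, sq_abs]

end CdfGridAux

namespace CdfGridAux
lemma measurableSet_C (s r : ℝ) :
    MeasurableSet {p : ℝ × ℝ | p.1^2 + p.2^2 ≤ r^2 ∧ |p.1| ≤ s/2 ∧ |p.2| ≤ s/2} := by
  apply MeasurableSet.inter
  · exact measurableSet_le ((measurable_fst.pow_const 2).add (measurable_snd.pow_const 2))
      measurable_const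
  apply MeasurableSet.inter
  · exact measurableSet_le measurable_fst.abs measurable_const
  · exact measurableSet_le measurable_snd.abs measurable_const
end CdfGridAux

/-- The grid point `s·k = (s k₁, s k₂)` for `k ∈ ℤ²`. -/
noncomputable def gridPt (s : ℝ) (k : ℤ × ℤ) : EuclideanSpace ℝ (Fin 2) :=
  (WithLp.equiv 2 (Fin 2 → ℝ)).symm ![s * (k.1 : ℝ), s * (k.2 : ℝ)]

/-- The square `S₀(s) = [−s/2, s/2] × [−s/2, s/2]`. -/
def square (s : ℝ) : Set (EuclideanSpace ℝ (Fin 2)) :=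
  {u | u 0 ∈ Set.Icc (-(s / 2)) (s / 2) ∧ u 1 ∈ Set.Icc (-(s / 2)) (s / 2)}

set_option maxHeartbeats 1000000 in
/-- Lemma 1: CDF of the nearest distance `R_g` from the origin to the
random shifted grid `{s·k + U : k ∈ ℤ²}` with `U` uniform on `S₀(s)`. -/
theorem cdf_nearest_grid_distance
    {Ω : Type*} [MeasurableSpace Ω] (P : Measure Ω) [IsProbabilityMeasure P]
    (s : ℝ) (hs : 0 < s) (U : Ω → EuclideanSpace ℝ (Fin 2))
    (hU : Measure.map U P = (volume (square s))⁻¹ • volume.restrict (square s))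
    (Rg : Ω → ℝ) (hRg : ∀ ω, Rg ω = ⨅ k : ℤ × ℤ, ‖gridPt s k + U ω‖) (r : ℝ) :
    (r < 0 → P {ω | Rg ω ≤ r} = 0) ∧
    (0 ≤ r → r ≤ s / 2 →
      P {ω | Rg ω ≤ r} = ENNReal.ofReal (π * r ^ 2 / s ^ 2)) ∧
    (s / 2 ≤ r → r ≤ s / Real.sqrt 2 →
      P {ω | Rg ω ≤ r} = ENNReal.ofReal
        ((π * r ^ 2 - 4 * r ^ 2 * Real.arccos (s / (2 * r))
            + s * Real.sqrt (4 * r ^ 2 - s ^ 2)) / s ^ 2)) ∧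
    (s / Real.sqrt 2 ≤ r → P {ω | Rg ω ≤ r} = 1) := by
  have hs2 : (0:ℝ) < s^2 := by positivity
  have hmp := CdfGridAux.measure_preserving_coords
  have hsq_pre : square s =
      (fun x : EuclideanSpace ℝ (Fin 2) => ((x 0, x 1) : ℝ × ℝ)) ⁻¹'
        (Set.Icc (-(s/2)) (s/2) ×ˢ Set.Icc (-(s/2)) (s/2)) := by
    rfl
  have hsq_meas : MeasurableSet (square s) := by
    rw [hsq_pre]; exact hmp.measurable (measurableSet_Icc.prod measurableSet_Icc)
  have hvol_sq : volume (square s) = ENNReal.ofReal (s^2) := by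
    rw [hsq_pre, hmp.measure_preimage ((measurableSet_Icc.prod measurableSet_Icc)).nullMeasurableSet,
      Measure.volume_eq_prod, Measure.prod_prod, Real.volume_Icc,
      show (s/2 - -(s/2)) = s by ring, ← ENNReal.ofReal_mul hs.le]
    congr 1; ring
  have hRg0 : ∀ ω, 0 ≤ Rg ω := fun ω => by
    rw [hRg]; exact le_ciInf fun k => norm_nonneg _
  have hUae : AEMeasurable U P := by
    by_contra h
    have h0 := Measure.map_of_not_aemeasurable (f := U) (μ := P) h
    have h1 : ((volume (square s))⁻¹ • volume.restrict (square s)) Set.univ = 0 := by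
      rw [← hU, h0]; rfl
    rw [Measure.smul_apply, smul_eq_mul, Measure.restrict_apply MeasurableSet.univ,
      Set.univ_inter, hvol_sq,
      ENNReal.inv_mul_cancel (ENNReal.ofReal_pos.mpr hs2).ne' ENNReal.ofReal_ne_top] at h1
    exact one_ne_zero h1
  have hae : ∀ᵐ ω ∂P, U ω ∈ square s := by
    rw [ae_iff]
    have heq : {ω | ¬ U ω ∈ square s} = U ⁻¹' (square s)ᶜ := rfl
    rw [heq, ← Measure.map_apply_of_aemeasurable hUae hsq_meas.compl, hU,
      Measure.smul_apply, smul_eq_mul, Measure.restrict_apply hsq_meas.compl,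
      Set.compl_inter_self, measure_empty, mul_zero]
  have hgrid0 : gridPt s (0, 0) = 0 := by
    ext i
    fin_cases i <;> simp [gridPt]
  have hinf : ∀ u : EuclideanSpace ℝ (Fin 2), u ∈ square s →
      (⨅ k : ℤ × ℤ, ‖gridPt s k + u‖) = ‖u‖ := by
    intro u hu
    have hbdd : BddBelow (Set.range fun k : ℤ × ℤ => ‖gridPt s k + u‖) :=
      ⟨0, by rintro _ ⟨k, rfl⟩; exact norm_nonneg _⟩
    apply le_antisymm
    · calc (⨅ k : ℤ × ℤ, ‖gridPt s k + u‖) ≤ ‖gridPt s (0,0) + u‖ := ciInf_le hbdd (0,0)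
        _ = ‖u‖ := by rw [hgrid0, zero_add]
    · apply le_ciInf
      intro k
      have comp : ∀ (ki : ℤ) (ui : ℝ), |ui| ≤ s/2 → ui^2 ≤ (s * ki + ui)^2 := by
        intro ki ui hui
        rcases eq_or_ne ki 0 with h | h
        · simp [h]
        · have h1 : (1:ℝ) ≤ |(ki:ℝ)| := by
            rw [← Int.cast_abs]; exact_mod_cast Int.one_le_abs h
          have h3 := abs_sub_abs_le_abs_sub (s * (ki:ℝ)) (-ui)
          rw [abs_neg, sub_neg_eq_add] at h3
          have h5 : |s * (ki:ℝ)| = s * |(ki:ℝ)| := by rw [abs_mul, abs_of_pos hs]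
          have h4 : |ui| ≤ |s * (ki:ℝ) + ui| := by nlinarith
          nlinarith [sq_abs ui, sq_abs (s * (ki:ℝ) + ui), abs_nonneg ui]
      have h0 : (gridPt s k + u) 0 = s * k.1 + u 0 := by simp [gridPt]
      have h1 : (gridPt s k + u) 1 = s * k.2 + u 1 := by simp [gridPt]
      rw [CdfGridAux.norm_eq_sqrt, CdfGridAux.norm_eq_sqrt, h0, h1]
      apply Real.sqrt_le_sqrt
      have c1 := comp k.1 (u 0) (abs_le.mpr ⟨hu.1.1, hu.1.2⟩)
      have c2 := comp k.2 (u 1) (abs_le.mpr ⟨hu.2.1, hu.2.2⟩)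
      exact add_le_add c1 c2
  have key : ∀ r' : ℝ, 0 ≤ r' → P {ω | Rg ω ≤ r'} =
      (ENNReal.ofReal (s^2))⁻¹ *
        volume (Metric.closedBall (0 : EuclideanSpace ℝ (Fin 2)) r' ∩ square s) := by
    intro r' _
    have hev : {ω | Rg ω ≤ r'} =ᵐ[P]
        U ⁻¹' (Metric.closedBall (0 : EuclideanSpace ℝ (Fin 2)) r' ∩ square s) := by
      rw [Filter.eventuallyEq_set]
      filter_upwards [hae] with ω hω
      simp only [Set.mem_setOf_eq, Set.mem_preimage, Set.mem_inter_iff, Metric.mem_closedBall,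
        dist_zero_right]
      rw [hRg ω, hinf _ hω]
      exact ⟨fun h => ⟨h, hω⟩, fun h => h.1⟩
    rw [measure_congr hev,
      ← Measure.map_apply_of_aemeasurable hUae (measurableSet_closedBall.inter hsq_meas), hU,
      Measure.smul_apply, smul_eq_mul,
      Measure.restrict_apply (measurableSet_closedBall.inter hsq_meas),
      Set.inter_assoc, Set.inter_self, hvol_sq]
  have part2 : ∀ r' : ℝ, 0 ≤ r' → r' ≤ s/2 →
      P {ω | Rg ω ≤ r'} = ENNReal.ofReal (π * r'^2 / s^2) := by
    intro r' h0 h1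
    rw [key r' h0]
    have hsub : Metric.closedBall (0 : EuclideanSpace ℝ (Fin 2)) r' ⊆ square s := by
      intro x hx
      rw [Metric.mem_closedBall, dist_zero_right, CdfGridAux.norm_eq_sqrt] at hx
      have hx0 : |x 0| ≤ s/2 := by
        have : |x 0| ≤ Real.sqrt (x 0^2 + x 1^2) := by
          rw [← Real.sqrt_sq_eq_abs]
          exact Real.sqrt_le_sqrt (by nlinarith [sq_nonneg (x 1)])
        linarith
      have hx1 : |x 1| ≤ s/2 := by
        have : |x 1| ≤ Real.sqrt (x 0^2 + x 1^2) := by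
          rw [← Real.sqrt_sq_eq_abs]
          exact Real.sqrt_le_sqrt (by nlinarith [sq_nonneg (x 0)])
        linarith
      exact ⟨abs_le.mp hx0, abs_le.mp hx1⟩
    rw [Set.inter_eq_left.mpr hsub, EuclideanSpace.volume_closedBall]
    simp only [Fintype.card_fin]
    rw [show ((2:ℕ):ℝ)/2 + 1 = 2 by norm_num,
      show Real.Gamma 2 = 1 by
        rw [show (2:ℝ) = 1 + 1 by norm_num, Real.Gamma_add_one one_ne_zero, Real.Gamma_one,
          mul_one],
      div_one, Real.sq_sqrt Real.pi_pos.le, ← ENNReal.ofReal_pow h0, ← ENNReal.ofReal_mul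
        (by positivity), ENNReal.ofReal_div_of_pos hs2, ENNReal.div_eq_inv_mul]
    congr 2
    ring
  refine ⟨fun hr => ?_, part2 r, fun h1 h2 => ?_, fun h => ?_⟩
  · have : {ω | Rg ω ≤ r} = ∅ := by
      ext ω
      simp only [Set.mem_setOf_eq, Set.mem_empty_iff_false, iff_false, not_le]
      exact lt_of_lt_of_le hr (hRg0 ω)
    rw [this, measure_empty]
  · rcases eq_or_lt_of_le h1 with heq | hlt
    · subst heq
      rw [part2 (s/2) (by positivity) le_rfl]
      congr 1
      rw [show s / (2 * (s/2)) = 1 by field_simp, Real.arccos_one,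
        show 4 * (s/2)^2 - s^2 = 0 by ring, Real.sqrt_zero]
      ring
    · have hr0 : (0:ℝ) ≤ r := le_of_lt (lt_of_le_of_lt (by positivity) hlt)
      rw [key r hr0]
      have hpre : Metric.closedBall (0 : EuclideanSpace ℝ (Fin 2)) r ∩ square s =
          (fun x : EuclideanSpace ℝ (Fin 2) => ((x 0, x 1) : ℝ × ℝ)) ⁻¹'
            {p : ℝ × ℝ | p.1^2 + p.2^2 ≤ r^2 ∧ |p.1| ≤ s/2 ∧ |p.2| ≤ s/2} := by
        ext x
        simp only [Set.mem_inter_iff, Metric.mem_closedBall, dist_zero_right, Set.mem_preimage,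
          Set.mem_setOf_eq, square, Set.mem_Icc, CdfGridAux.norm_eq_sqrt]
        rw [Real.sqrt_le_iff, abs_le, abs_le]
        constructor
        · rintro ⟨⟨_, hA⟩, hB, hC⟩; exact ⟨hA, hB, hC⟩
        · rintro ⟨hA, hB, hC⟩; exact ⟨⟨hr0, hA⟩, hB, hC⟩
      rw [hpre, hmp.measure_preimage (CdfGridAux.measurableSet_C s r).nullMeasurableSet,
        CdfGridAux.volC hs h1, CdfGridAux.area_integral hs hlt h2,
        ENNReal.ofReal_div_of_pos hs2, ENNReal.div_eq_inv_mul]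
  · have hr0 : (0:ℝ) ≤ r := le_trans (by positivity) h
    rw [key r hr0]
    have hsub : square s ⊆ Metric.closedBall (0 : EuclideanSpace ℝ (Fin 2)) r := by
      intro u hu
      rw [Metric.mem_closedBall, dist_zero_right, CdfGridAux.norm_eq_sqrt]
      have h1 := abs_le.mpr ⟨hu.1.1, hu.1.2⟩
      have h2 := abs_le.mpr ⟨hu.2.1, hu.2.2⟩
      calc Real.sqrt (u 0^2 + u 1^2) ≤ Real.sqrt (s^2/2) := by
            apply Real.sqrt_le_sqrt
            nlinarith [sq_abs (u 0), sq_abs (u 1), abs_nonneg (u 0), abs_nonneg (u 1),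
              mul_self_le_mul_self (abs_nonneg (u 0)) h1, mul_self_le_mul_self (abs_nonneg (u 1)) h2]
        _ = s / Real.sqrt 2 := by rw [Real.sqrt_div (sq_nonneg s), Real.sqrt_sq hs.le]
        _ ≤ r := h
    rw [Set.inter_eq_right.mpr hsub, hvol_sq,
      ENNReal.inv_mul_cancel (ENNReal.ofReal_pos.mpr hs2).ne' ENNReal.ofReal_ne_top]
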